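/- Let $\alpha_1\in\mathbb{R}$, $\alpha_1\ne 0$, and $k>0$. Define $a_1:\mathbb{R}\to\mathbb{R}$ by $a_1(z)=\dfrac{\alpha_1\,e^{-\alpha_1^2 z}}{\sqrt{k+e^{-2\alpha_1^2 z}}}$. Then $a_1$ is differentiable and satisfies the ODE $a_1'(z)=\big(a_1(z)^2-\alpha_1^2\big)\,a_1(z)$ for all $z\in\mathbb{R}$, with $\lim_{z\to-\infty}a_1(z)=\alpha_1$ and $\lim_{z\to+\infty}a_1(z)=0$. -/

import Mathlib

/-!
Dividing numerator and denominator by `e^{-α²z}` puts the profile in the form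
`α / √u` with `u = k e^{2α²z} + 1`. Then `a² = α² / u`, so `(a² - α²) a = -α² (u - 1) a / u`,
which is exactly what the chain rule gives for `a'`; as `z → -∞` we have `u → 1`, and as
`z → +∞` we have `u → ∞`.
-/

open Real Filter Topology

noncomputable def shearProfile (α k z : ℝ) : ℝ := α / √(k * exp (2 * α ^ 2 * z) + 1)

theorem shearProfile_eq (α k z : ℝ) :
    shearProfile α k z = α * exp (-(α ^ 2) * z) / √(k + exp (-(2 * α ^ 2) * z)) := by
  set E := exp (-(α ^ 2) * z)
  have hE : 0 < E := exp_pos _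
  have hsplit : k + exp (-(2 * α ^ 2) * z) = E ^ 2 * (k * exp (2 * α ^ 2 * z) + 1) := by
    simp only [E, ← exp_nat_mul, mul_add, mul_left_comm _ k, ← exp_add]
    ring_nf
    simp
  rw [shearProfile, hsplit, sqrt_mul (sq_nonneg _), sqrt_sq hE.le]
  field_simp

theorem hasDerivAt_shearProfile (α : ℝ) {k : ℝ} (hk : 0 ≤ k) (z : ℝ) :
    HasDerivAt (shearProfile α k) ((shearProfile α k z ^ 2 - α ^ 2) * shearProfile α k z) z := by
  set e := exp (2 * α ^ 2 * z) with he
  set u := k * e + 1 with hu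
  have hu_pos : 0 < u := by positivity
  have hu' : HasDerivAt (fun z => k * exp (2 * α ^ 2 * z) + 1)
      (k * (e * (2 * α ^ 2))) z := by
    simpa using ((((hasDerivAt_id z).const_mul (2 * α ^ 2)).exp).const_mul k).add_const 1
  refine (((hu'.sqrt hu_pos.ne').inv (sqrt_pos.2 hu_pos).ne').const_mul α).congr_deriv ?_
  have hsq : √u ^ 2 = u := sq_sqrt hu_pos.le
  simp only [shearProfile, ← he, ← hu]
  field_simp
  rw [hsq, hu]
  ring

theorem tendsto_shearProfile_atBot {α : ℝ} (hα : α ≠ 0) (k : ℝ) :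
    Tendsto (shearProfile α k) atBot (𝓝 α) := by
  have hexp : Tendsto (fun z => exp (2 * α ^ 2 * z)) atBot (𝓝 0) :=
    tendsto_exp_atBot.comp (tendsto_id.const_mul_atBot (by positivity))
  have h := tendsto_const_nhds (x := α) |>.div ((hexp.const_mul k).add_const 1).sqrt (by simp)
  rwa [mul_zero, zero_add, sqrt_one, div_one] at h

theorem tendsto_shearProfile_atTop {α k : ℝ} (hα : α ≠ 0) (hk : 0 < k) :
    Tendsto (shearProfile α k) atTop (𝓝 0) := by
  have hexp : Tendsto (fun z => exp (2 * α ^ 2 * z)) atTop atTop :=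
    tendsto_exp_atTop.comp (tendsto_id.const_mul_atTop (by positivity))
  exact tendsto_const_nhds.div_atTop
    (tendsto_sqrt_atTop.comp ((hexp.const_mul_atTop hk).atTop_add tendsto_const_nhds))

/-- The explicit profile `a₁(z) = α₁ e^{-α₁²z} / √(k + e^{-2α₁²z})` (with `α₁ ≠ 0`, `k > 0`)
is differentiable, solves `a₁' = (a₁² - α₁²) a₁`, and connects the endstates
`a₁(-∞) = α₁` and `a₁(+∞) = 0`. -/
theorem explicit_shear_profile (α₁ k : ℝ) (hα : α₁ ≠ 0) (hk : 0 < k)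
    (a₁ : ℝ → ℝ)
    (ha : ∀ z, a₁ z = α₁ * Real.exp (-(α₁ ^ 2) * z) /
        Real.sqrt (k + Real.exp (-(2 * α₁ ^ 2) * z))) :
    (∀ z, HasDerivAt a₁ ((a₁ z ^ 2 - α₁ ^ 2) * a₁ z) z) ∧
    Filter.Tendsto a₁ Filter.atBot (nhds α₁) ∧
    Filter.Tendsto a₁ Filter.atTop (nhds 0) := by
  obtain rfl : a₁ = shearProfile α₁ k :=
    funext fun z => (ha z).trans (shearProfile_eq α₁ k z).symm
  exact ⟨hasDerivAt_shearProfile α₁ hk.le, tendsto_shearProfile_atBot hα k,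
    tendsto_shearProfile_atTop hα hk⟩
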